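/- arXiv:2012.11034 — 3 statements merged into one kernel-verified Lean document; each statement's English description precedes it below -/
import Mathlib

section
/- Let T be a pretriangulated category. Suppose given two distinguished triangles (A, B, C, u, v, w) and (A', B', C', u', v', w') and morphisms f : A → A', g : B → B' with u' ∘ f = g ∘ u. If the homomorphism of abelian groups Hom(A[1], C') → Hom(C, C') given by precomposition with w : C → A[1] is the zero map, then there exists a unique morphism h : C → C' satisfying h ∘ v = v' ∘ g, and this h moreover satisfies w' ∘ h = f[1] ∘ w, so that (f, g, h) is a morphism of distinguished triangles. -/
open CategoryTheory CategoryTheory.Pretriangulated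

namespace CategoryTheory.Pretriangulated

variable {C : Type*} [Category C] [Limits.HasZeroObject C] [HasShift C ℤ]
  [Preadditive C] [∀ n : ℤ, (CategoryTheory.shiftFunctor C n).Additive] [Pretriangulated C]

theorem Triangle.eq_of_mor₂_comp_eq {T : Triangle C} (hT : T ∈ distTriang C) {X : C}
    (hzero : ∀ φ : T.obj₁⟦(1 : ℤ)⟧ ⟶ X, T.mor₃ ≫ φ = 0) {h h' : T.obj₃ ⟶ X}
    (hh : T.mor₂ ≫ h = T.mor₂ ≫ h') : h = h' := by
  obtain ⟨φ, hφ⟩ := yoneda_exact₃ T hT (h - h') (by rw [Preadditive.comp_sub, hh, sub_self])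
  rwa [hzero φ, sub_eq_zero] at hφ

end CategoryTheory.Pretriangulated

/-- Let `T` be a pretriangulated category. Given two distinguished
triangles `(A, B, C, u, v, w)` and `(A', B', C', u', v', w')` and morphisms
`f : A ⟶ A'`, `g : B ⟶ B'` with `u' ∘ f = g ∘ u`, if precomposition with
`w : C ⟶ A⟦1⟧` is the zero map `Hom(A⟦1⟧, C') → Hom(C, C')`, then there is a
unique `h : C ⟶ C'` with `h ∘ v = v' ∘ g`, and this `h` moreover satisfies
`w' ∘ h = f⟦1⟧ ∘ w`, so that `(f, g, h)` is a morphism of distinguished triangles. -/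
theorem stmt0 {T : Type*} [Category T] [Limits.HasZeroObject T] [HasShift T ℤ]
    [Preadditive T] [∀ n : ℤ, (shiftFunctor T n).Additive] [Pretriangulated T]
    {A B C A' B' C' : T}
    (u : A ⟶ B) (v : B ⟶ C) (w : C ⟶ A⟦(1 : ℤ)⟧)
    (u' : A' ⟶ B') (v' : B' ⟶ C') (w' : C' ⟶ A'⟦(1 : ℤ)⟧)
    (hT : Triangle.mk u v w ∈ distTriang T)
    (hT' : Triangle.mk u' v' w' ∈ distTriang T)
    (f : A ⟶ A') (g : B ⟶ B') (hfg : f ≫ u' = u ≫ g)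
    (hzero : ∀ φ : A⟦(1 : ℤ)⟧ ⟶ C', w ≫ φ = 0) :
    ∃ h : C ⟶ C',
      (v ≫ h = g ≫ v' ∧ h ≫ w' = w ≫ f⟦(1 : ℤ)⟧') ∧
      ∀ h' : C ⟶ C', v ≫ h' = g ≫ v' → h' = h := by
  obtain ⟨h, hv, hw⟩ := complete_distinguished_triangle_morphism _ _ hT hT' f g hfg.symm
  exact ⟨h, ⟨hv, hw.symm⟩, fun h' hh' =>
    Triangle.eq_of_mor₂_comp_eq hT hzero (hh'.trans hv.symm)⟩
end

section
/- Let T be a pretriangulated category and u : A → B a morphism. Suppose (A, B, C, u, v, w) and (A, B, C', u, v', w') are two distinguished triangles completing u, and suppose that the homomorphism Hom(A[1], C') → Hom(C, C') given by precomposition with w is the zero map. Then there exists a unique isomorphism h : C → C' such that h ∘ v = v' and w' ∘ h = w. -/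
open CategoryTheory CategoryTheory.Pretriangulated

lemma CategoryTheory.Pretriangulated.Triangle.eq_of_mor₂_comp_eq_s1 {C : Type*} [Category C]
    [Limits.HasZeroObject C] [HasShift C ℤ] [Preadditive C]
    -- unqualified, `shiftFunctor` would resolve to `Triangle.shiftFunctor` here
    [∀ n : ℤ, (CategoryTheory.shiftFunctor C n).Additive] [Pretriangulated C] {Δ : Triangle C}
    (hΔ : Δ ∈ distTriang C) {X : C} (hzero : ∀ φ : Δ.obj₁⟦(1 : ℤ)⟧ ⟶ X, Δ.mor₃ ≫ φ = 0)
    {f g : Δ.obj₃ ⟶ X} (hfg : Δ.mor₂ ≫ f = Δ.mor₂ ≫ g) : f = g := by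
  obtain ⟨φ, hφ⟩ := Triangle.yoneda_exact₃ _ hΔ (f - g) <| by
    rw [Preadditive.comp_sub, hfg, sub_self]
  rw [← sub_eq_zero, hφ, hzero]

/-- In a pretriangulated category, if `(A, B, C, u, v, w)` and
`(A, B, C', u, v', w')` are two distinguished triangles completing the same
morphism `u : A ⟶ B`, and precomposition with `w` gives the zero map
`Hom(A⟦1⟧, C') → Hom(C, C')`, then there is a unique isomorphism `h : C ≅ C'`
with `h ∘ v = v'` and `w' ∘ h = w`. -/
theorem stmt1 {T : Type*} [Category T] [Limits.HasZeroObject T] [HasShift T ℤ]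
    [Preadditive T] [∀ n : ℤ, (shiftFunctor T n).Additive] [Pretriangulated T]
    {A B C C' : T}
    (u : A ⟶ B) (v : B ⟶ C) (w : C ⟶ A⟦(1 : ℤ)⟧)
    (v' : B ⟶ C') (w' : C' ⟶ A⟦(1 : ℤ)⟧)
    (hT : Triangle.mk u v w ∈ distTriang T)
    (hT' : Triangle.mk u v' w' ∈ distTriang T)
    (hzero : ∀ φ : A⟦(1 : ℤ)⟧ ⟶ C', w ≫ φ = 0) :
    ∃! h : C ≅ C', v ≫ h.hom = v' ∧ h.hom ≫ w' = w := by
  obtain ⟨e, he₁, he₂⟩ := exists_iso_of_arrow_iso _ _ hT hT' (Iso.refl (Arrow.mk u))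
  have hv : v ≫ e.hom.hom₃ = v' := by
    have := e.hom.comm₂
    rw [he₂] at this
    exact this.trans (Category.id_comp _)
  have hw : e.hom.hom₃ ≫ w' = w := by
    have := e.hom.comm₃
    rw [he₁] at this
    exact this.symm.trans ((w ≫= (shiftFunctor T 1).map_id A).trans (Category.comp_id w))
  refine ⟨Triangle.π₃.mapIso e, ⟨hv, hw⟩, fun e' ⟨hv', _⟩ => ?_⟩
  ext
  exact Triangle.eq_of_mor₂_comp_eq_s1 hT hzero (hv'.trans hv.symm)
end

section
/- Let A be a cochain complex of abelian groups such that each cohomology group H^i(A) is a finite-dimensional ℚ-vector space (equivalently, a uniquely divisible abelian group of finite rank), and let C be a cochain complex of abelian groups such that each H^i(C) is a finitely generated abelian group. Then the abelian group Hom_{D(ℤ)}(A, C) is divisible. -/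
/-!
Multiplication by `n > 0` acts invertibly on every cohomology group of `A`, because these are
`ℚ`-vector spaces. Hence `n • 𝟙 A` is a quasi-isomorphism, so `n • 𝟙` is an isomorphism of `A`
in the derived category, and every morphism out of `A` there is `n` times another one.
-/

open CategoryTheory

lemma CategoryTheory.Preadditive.exists_nsmul_eq_of_isIso_nsmul_id {C : Type*} [Category C]
    [Preadditive C] {X Y : C} {n : ℕ} [IsIso (n • 𝟙 X)] (f : X ⟶ Y) :
    ∃ g : X ⟶ Y, n • g = f :=
  ⟨inv (n • 𝟙 X) ≫ f, calc
    n • (inv (n • 𝟙 X) ≫ f) = (n • 𝟙 X) ≫ inv (n • 𝟙 X) ≫ f := by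
      rw [Preadditive.nsmul_comp, Category.id_comp]
    _ = f := IsIso.hom_inv_id_assoc _ _⟩

lemma HomologicalComplex.homologyMap_nsmul {C ι : Type*} [Category C] [Preadditive C]
    [CategoryWithHomology C] {c : ComplexShape ι} {K L : HomologicalComplex C c}
    (φ : K ⟶ L) (n : ℕ) (i : ι) : homologyMap (n • φ) i = n • homologyMap φ i :=
  (homologyFunctor C c i).map_nsmul

lemma HomologicalComplex.quasiIso_nsmul_id {C ι : Type*} [Category C] [Preadditive C]
    [CategoryWithHomology C] {c : ComplexShape ι} (K : HomologicalComplex C c) (n : ℕ)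
    (h : ∀ i, IsIso (n • 𝟙 (K.homology i))) : QuasiIso (n • 𝟙 K) := by
  rw [quasiIso_iff]
  intro i
  rw [quasiIsoAt_iff_isIso_homologyMap, homologyMap_nsmul, homologyMap_id]
  exact h i

lemma AddCommGrpCat.isIso_nsmul_id_of_module_rat (X : AddCommGrpCat) [Module ℚ X] {n : ℕ}
    (hn : n ≠ 0) : IsIso (n • 𝟙 X) := by
  rw [ConcreteCategory.isIso_iff_bijective]
  have hunit : IsUnit (n : ℚ) := by simpa using hn
  convert hunit.smul_bijective (β := X) using 1
  ext x
  simp [Nat.cast_smul_eq_nsmul]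

theorem stmt5_general [HasDerivedCategory AddCommGrpCat]
    (A C : CochainComplex AddCommGrpCat ℤ)
    (hA : ∀ i : ℤ, ∃ m : Module ℚ (A.homology i),
      @Module.Finite ℚ (A.homology i) _ _ m) :
    ∀ d : (DerivedCategory.Q.obj A ⟶ DerivedCategory.Q.obj C),
      ∀ n : ℕ, 0 < n → ∃ e : (DerivedCategory.Q.obj A ⟶ DerivedCategory.Q.obj C),
        n • e = d := by
  intro d n hn
  have : QuasiIso (n • 𝟙 A) := A.quasiIso_nsmul_id n fun i ↦ by
    obtain ⟨_, _⟩ := hA i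
    exact AddCommGrpCat.isIso_nsmul_id_of_module_rat _ hn.ne'
  have : IsIso (n • 𝟙 (DerivedCategory.Q.obj A)) := by
    rw [← DerivedCategory.Q.map_id, ← Functor.map_nsmul]
    infer_instance
  exact Preadditive.exists_nsmul_eq_of_isIso_nsmul_id d

/-- Let `A` be a cochain complex of abelian groups whose cohomology
groups are finite-dimensional `ℚ`-vector spaces (i.e. each `H^i(A)` carries a
`ℚ`-module structure, necessarily unique, for which it is finite-dimensional),
and let `C` be a cochain complex of abelian groups with finitely generated
cohomology groups. Then the abelian group `Hom_{D(ℤ)}(A, C)` is divisible. -/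
theorem stmt5 [HasDerivedCategory AddCommGrpCat]
    (A C : CochainComplex AddCommGrpCat ℤ)
    (hA : ∀ i : ℤ, ∃ m : Module ℚ (A.homology i),
      @Module.Finite ℚ (A.homology i) _ _ m)
    (hC : ∀ i : ℤ, AddGroup.FG (C.homology i)) :
    ∀ d : (DerivedCategory.Q.obj A ⟶ DerivedCategory.Q.obj C),
      ∀ n : ℕ, 0 < n → ∃ e : (DerivedCategory.Q.obj A ⟶ DerivedCategory.Q.obj C),
        n • e = d :=
  stmt5_general A C hA
end
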